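/- Let p₀ be a squarefree integer with 3 ∤ p₀, set p = 9·p₀, and let q be a positive integer coprime to p. Then there do not exist integers m, ℓ, ℓ₀, A, B, σ, S, V and ε ∈ {1, -1} such that: m·p − q·ℓ² = ε·p, ℓ² = p·ℓ₀, p ∤ ℓ, and −12·ε·q·B + 3·ε·S − 3·ε·p·σ = 24·p·A + 24·q·m·B − 2·p − ℓ₀·(q² + 1) + ℓ²·(m·q + p) + 12·q·V − ε·p·(1 + m). -/

import Mathlib

/-!
Reduce the surgery equation modulo 3. Since `3 ∣ p` and `ℓ² = p ℓ₀`, every term except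
`ℓ₀ (q² + 1)` is a multiple of 3, so 3 divides `ℓ₀` or `q² + 1`. The latter is impossible since
squares are 0 or 1 mod 3. For the former, `ℓ² = 9 p₀ ℓ₀` with `3 ∣ ℓ₀` forces `27 ∣ ℓ²`, hence
`9 ∣ ℓ`; as `p₀` is squarefree and prime to 3, also `p₀ ∣ ℓ`, so `p = 9 p₀ ∣ ℓ`.
-/

theorem Prime.sq_dvd_of_pow_three_dvd_sq {R : Type*} [CommRing R] [IsDomain R] {r x : R}
    (hr : Prime r) (h : r ^ 3 ∣ x ^ 2) : r ^ 2 ∣ x := by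
  obtain ⟨k, rfl⟩ := hr.dvd_of_dvd_pow (dvd_trans (dvd_pow_self r three_ne_zero) h)
  have hk : r ∣ k ^ 2 := by
    rw [mul_pow, pow_succ] at h
    exact (mul_dvd_mul_iff_left (pow_ne_zero 2 hr.ne_zero)).mp h
  rw [sq]
  exact mul_dvd_mul_left r (hr.dvd_of_dvd_pow hk)

theorem Prime.not_dvd_of_sq_eq_sq_mul_mul {R : Type*} [CommRing R] [IsDomain R]
    [IsPrincipalIdealRing R] {r d x y : R} (hr : Prime r) (hd : Squarefree d) (hrd : ¬ r ∣ d)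
    (hx : x ^ 2 = r ^ 2 * d * y) (hdx : ¬ r ^ 2 * d ∣ x) : ¬ r ∣ y := by
  rintro ⟨c, rfl⟩
  have hr2 : r ^ 2 ∣ x := hr.sq_dvd_of_pow_three_dvd_sq ⟨d * c, by rw [hx]; ring⟩
  have hd2 : d ∣ x := (hd.dvd_pow_iff_dvd two_ne_zero).mp ⟨r ^ 3 * c, by rw [hx]; ring⟩
  exact hdx (((hr.coprime_iff_not_dvd.mpr hrd).pow_left).mul_dvd hr2 hd2)

theorem Int.not_three_dvd_sq_add_one (q : ℤ) : ¬ 3 ∣ q ^ 2 + 1 := by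
  intro h
  have h3 := (ZMod.intCast_zmod_eq_zero_iff_dvd (q ^ 2 + 1) 3).mpr h
  push_cast at h3
  have hno : ∀ x : ZMod 3, x ^ 2 + 1 ≠ 0 := by decide
  exact hno q h3

theorem three_dvd_mul_sq_add_one_of_casson_walker {p q m ℓ ℓ₀ A B σ S V ε : ℤ} (hp : 3 ∣ p)
    (hsq : ℓ ^ 2 = p * ℓ₀)
    (heq : -12 * ε * q * B + 3 * ε * S - 3 * ε * p * σ =
        24 * p * A + 24 * q * m * B - 2 * p - ℓ₀ * (q ^ 2 + 1) +
          ℓ ^ 2 * (m * q + p) + 12 * q * V - ε * p * (1 + m)) :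
    3 ∣ ℓ₀ * (q ^ 2 + 1) := by
  obtain ⟨c, rfl⟩ := hp
  exact ⟨24 * c * A + 8 * q * m * B - 2 * c + c * ℓ₀ * (m * q + 3 * c) + 4 * q * V
    - ε * c * (1 + m) + 4 * ε * q * B - ε * S + 3 * ε * c * σ,
    by linear_combination heq + (m * q + 3 * c) * hsq⟩

theorem stmt_7_general (p₀ p q : ℤ) (hsf : Squarefree p₀) (h3 : ¬ (3 ∣ p₀))
    (hp : p = 9 * p₀) :
    ¬ ∃ (m ℓ ℓ₀ A B σ S V ε : ℤ), (ε = 1 ∨ ε = -1) ∧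
      m * p - q * ℓ ^ 2 = ε * p ∧
      ℓ ^ 2 = p * ℓ₀ ∧
      ¬ (p ∣ ℓ) ∧
      -12 * ε * q * B + 3 * ε * S - 3 * ε * p * σ =
        24 * p * A + 24 * q * m * B - 2 * p - ℓ₀ * (q ^ 2 + 1) +
          ℓ ^ 2 * (m * q + p) + 12 * q * V - ε * p * (1 + m) := by
  rintro ⟨m, ℓ, ℓ₀, A, B, σ, S, V, ε, -, -, hsq, hpℓ, heq⟩
  subst hp
  have hℓ₀ : ¬ 3 ∣ ℓ₀ :=
    Int.prime_three.not_dvd_of_sq_eq_sq_mul_mul hsf h3 (by rw [hsq]; ring) (by norm_num [hpℓ])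
  rcases Int.prime_three.dvd_mul.mp
      (three_dvd_mul_sq_add_one_of_casson_walker ⟨3 * p₀, by ring⟩ hsq heq) with h | h
  · exact hℓ₀ h
  · exact Int.not_three_dvd_sq_add_one q h

/-- Let p₀ be a squarefree integer with 3 ∤ p₀, set p = 9·p₀, and let q be a
positive integer coprime to p. Then there do not exist integers
m, ℓ, ℓ₀, A, B, σ, S, V and ε ∈ {1, -1} such that: m·p − q·ℓ² = ε·p,
ℓ² = p·ℓ₀, p ∤ ℓ, and
−12·ε·q·B + 3·ε·S − 3·ε·p·σ =
  24·p·A + 24·q·m·B − 2·p − ℓ₀·(q² + 1) + ℓ²·(m·q + p) + 12·q·V − ε·p·(1 + m). -/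
theorem stmt_7 (p₀ p q : ℤ) (hsf : Squarefree p₀) (h3 : ¬ (3 ∣ p₀))
    (hp : p = 9 * p₀) (hq : 0 < q) (hpq : IsCoprime p q) :
    ¬ ∃ (m ℓ ℓ₀ A B σ S V ε : ℤ), (ε = 1 ∨ ε = -1) ∧
      m * p - q * ℓ ^ 2 = ε * p ∧
      ℓ ^ 2 = p * ℓ₀ ∧
      ¬ (p ∣ ℓ) ∧
      -12 * ε * q * B + 3 * ε * S - 3 * ε * p * σ =
        24 * p * A + 24 * q * m * B - 2 * p - ℓ₀ * (q ^ 2 + 1) +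
          ℓ ^ 2 * (m * q + p) + 12 * q * V - ε * p * (1 + m) :=
  stmt_7_general p₀ p q hsf h3 hp
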